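/- arXiv:2101.11316 — 6 statements merged into one kernel-verified Lean document; each statement's English description precedes it below -/
import Mathlib

section
/- Let d ≥ 2 be an integer. For every bounded Borel set A ⊆ ℝ^{d−1} and every bounded Borel set B ⊆ ℝ, lim_{β→∞} c_{d,β} (2β)^{−d/2} ∫_A ∫_B 1{s ≥ −2β} (1 + s/(2β))^β ds dw = (2π)^{−d/2} · λ_{d−1}(A) · ∫_B e^{s/2} ds, where λ_{d−1} is Lebesgue measure on ℝ^{d−1}. -/
open MeasureTheory

/-- The constant `c_{d,β} = Γ(d/2+β+1)/(π^{d/2} Γ(β+1))`. -/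
noncomputable def cBeta (d : ℕ) (β : ℝ) : ℝ :=
  Real.Gamma ((d : ℝ) / 2 + β + 1) / (Real.pi ^ ((d : ℝ) / 2) * Real.Gamma (β + 1))

/-!
The integrand does not depend on `v`, so the outer integral only contributes the factor `λ(A)`.
The constant converges by Wendel's limit `Γ(x + a) / (Γ(x) x ^ a) → 1`, which follows from the
log-convexity of `Γ` for `a ∈ [0, 1]` and from `Γ(x + 1) = x Γ(x)` beyond. The `s`-integral
converges by dominated convergence, since `1 + t ≤ eᵗ` gives `(1 + s / (2β)) ^ β ≤ e^{s/2}`,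
which is integrable on the bounded set `B`.
-/

open Filter Real Set Topology

lemma tendsto_add_const_div_self_atTop (c : ℝ) :
    Tendsto (fun x : ℝ => (x + c) / x) atTop (𝓝 1) := by
  have h : Tendsto (fun x : ℝ => 1 + c / x) atTop (𝓝 (1 + 0)) :=
    tendsto_const_nhds.add (tendsto_const_nhds.div_atTop tendsto_id)
  rw [add_zero] at h
  refine h.congr' ?_
  filter_upwards [eventually_ne_atTop 0] with x hx
  field_simp

namespace Real

/-- Wendel's inequality. -/
lemma Gamma_add_le_Gamma_mul_rpow {x θ : ℝ} (hx : 0 < x) (hθ : θ ∈ Icc (0 : ℝ) 1) :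
    Gamma (x + θ) ≤ Gamma x * x ^ θ := by
  obtain rfl | hθ0 := hθ.1.eq_or_lt
  · simp
  obtain rfl | hθ1 := hθ.2.eq_or_lt
  · rw [Gamma_add_one hx.ne', rpow_one, mul_comm]
  have hΓ : 0 < Gamma x := Gamma_pos_of_pos hx
  calc Gamma (x + θ) = Gamma ((1 - θ) * x + θ * (x + 1)) := by ring_nf
    _ ≤ Gamma x ^ (1 - θ) * Gamma (x + 1) ^ θ :=
      Gamma_mul_add_mul_le_rpow_Gamma_mul_rpow_Gamma hx (by linarith) (by linarith) hθ0
        (by ring)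
    _ = Gamma x * x ^ θ := by
      rw [Gamma_add_one hx.ne', mul_rpow hx.le hΓ.le, mul_left_comm,
        ← rpow_add hΓ, sub_add_cancel, rpow_one, mul_comm]

lemma tendsto_Gamma_add_div_Gamma_mul_rpow_of_mem_Icc {θ : ℝ} (hθ : θ ∈ Icc (0 : ℝ) 1) :
    Tendsto (fun x : ℝ => Gamma (x + θ) / (Gamma x * x ^ θ)) atTop (𝓝 1) := by
  have hlow : Tendsto (fun x : ℝ => ((x + θ) / x) ^ (θ - 1)) atTop (𝓝 1) := by
    simpa using
      (tendsto_add_const_div_self_atTop θ).rpow_const (p := θ - 1) (Or.inl one_ne_zero)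
  refine tendsto_of_tendsto_of_tendsto_of_le_of_le' hlow tendsto_const_nhds ?_ ?_
  all_goals filter_upwards [eventually_gt_atTop 0] with x hx
  · have hxθ : 0 < x + θ := by linarith [hθ.1]
    -- Wendel's inequality at `x + θ` with exponent `1 - θ`
    have h := Gamma_add_le_Gamma_mul_rpow hxθ (θ := 1 - θ)
      ⟨by linarith [hθ.2], by linarith [hθ.1]⟩
    rw [add_add_sub_cancel, Gamma_add_one hx.ne'] at h
    rw [le_div_iff₀ (mul_pos (Gamma_pos_of_pos hx) (rpow_pos_of_pos hx θ)),
      div_rpow hxθ.le hx.le]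
    calc (x + θ) ^ (θ - 1) / x ^ (θ - 1) * (Gamma x * x ^ θ)
        = (x + θ) ^ (θ - 1) * (x * Gamma x) := by rw [rpow_sub_one hx.ne']; field_simp
      _ ≤ (x + θ) ^ (θ - 1) * (Gamma (x + θ) * (x + θ) ^ (1 - θ)) := by gcongr
      _ = Gamma (x + θ) := by rw [mul_left_comm, ← rpow_add hxθ]; simp
  · exact div_le_one_of_le₀ (Gamma_add_le_Gamma_mul_rpow hx hθ)
      (mul_pos (Gamma_pos_of_pos hx) (rpow_pos_of_pos hx θ)).le

lemma tendsto_Gamma_add_div_Gamma_mul_rpow {a : ℝ} (ha : 0 ≤ a) :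
    Tendsto (fun x : ℝ => Gamma (x + a) / (Gamma x * x ^ a)) atTop (𝓝 1) := by
  suffices ∀ n : ℕ, ∀ θ ∈ Icc (0 : ℝ) 1,
      Tendsto (fun x : ℝ => Gamma (x + (θ + n)) / (Gamma x * x ^ (θ + n))) atTop (𝓝 1) by
    simpa using this ⌊a⌋₊ (a - ⌊a⌋₊)
      ⟨sub_nonneg.2 (Nat.floor_le ha), by linarith [Nat.lt_floor_add_one a]⟩
  intro n θ hθ
  induction n with
  | zero => simpa using tendsto_Gamma_add_div_Gamma_mul_rpow_of_mem_Icc hθ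
  | succ n ih =>
    have h := ih.mul (tendsto_add_const_div_self_atTop (θ + n))
    rw [mul_one] at h
    refine h.congr' ?_
    filter_upwards [eventually_gt_atTop 0] with x hx
    have hxθn : 0 < x + (θ + n) := by linarith [hθ.1, n.cast_nonneg (α := ℝ)]
    rw [Nat.cast_succ, ← add_assoc θ, ← add_assoc x (θ + n), Gamma_add_one hxθn.ne',
      rpow_add_one hx.ne']
    have := Gamma_pos_of_pos hx
    field_simp

end Real

lemma tendsto_cBeta_mul_rpow (d : ℕ) :
    Tendsto (fun β : ℝ => cBeta d β * (2 * β) ^ (-(d : ℝ) / 2)) atTop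
      (𝓝 ((2 * π) ^ (-(d : ℝ) / 2))) := by
  set D : ℝ := (d : ℝ) / 2 with hD
  have hΓ := (tendsto_Gamma_add_div_Gamma_mul_rpow (a := D) (by positivity)).comp
    (tendsto_atTop_add_const_right _ 1 tendsto_id)
  have hq := (tendsto_add_const_div_self_atTop 1).rpow_const (p := D) (Or.inl one_ne_zero)
  have h := (hΓ.mul hq).mul_const ((2 * π) ^ (-D))
  rw [one_rpow, one_mul, one_mul] at h
  rw [neg_div]
  refine h.congr' ?_
  filter_upwards [eventually_gt_atTop 0] with β hβ
  have hβ1 : 0 < β + 1 := by linarith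
  have := Gamma_pos_of_pos hβ1
  have := rpow_pos_of_pos hβ1 D
  have := rpow_pos_of_pos hβ D
  have := rpow_pos_of_pos pi_pos D
  simp only [Function.comp_apply, id, cBeta]
  rw [div_rpow hβ1.le hβ.le, rpow_neg (by positivity), rpow_neg (by positivity),
    mul_rpow two_pos.le pi_pos.le, mul_rpow two_pos.le hβ.le, ← hD,
    show D + β + 1 = β + 1 + D by ring]
  field_simp

lemma norm_ite_one_add_div_rpow_le_exp {β : ℝ} (hβ : 0 < β) (s : ℝ) :
    ‖if -(2 * β) ≤ s then (1 + s / (2 * β)) ^ β else 0‖ ≤ exp (s / 2) := by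
  split_ifs with hs
  · have hbase : 0 ≤ 1 + s / (2 * β) := by
      rw [← neg_le_iff_add_nonneg', le_div_iff₀ (by positivity)]
      linarith
    calc ‖(1 + s / (2 * β)) ^ β‖ = (1 + s / (2 * β)) ^ β :=
          Real.norm_of_nonneg (rpow_nonneg hbase β)
      _ ≤ exp (s / (2 * β)) ^ β := by gcongr; linarith [add_one_le_exp (s / (2 * β))]
      _ = exp (s / 2) := by rw [← exp_mul]; field_simp
  · simpa using (exp_pos _).le

lemma tendsto_ite_one_add_div_rpow_exp (s : ℝ) :
    Tendsto (fun β : ℝ => if -(2 * β) ≤ s then (1 + s / (2 * β)) ^ β else 0) atTop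
      (𝓝 (exp (s / 2))) := by
  refine (tendsto_one_add_div_rpow_exp (s / 2)).congr' ?_
  filter_upwards [eventually_ge_atTop (-s / 2)] with β hβ
  rw [if_pos (by linarith), div_div]

lemma tendsto_setIntegral_ite_one_add_div_rpow {B : Set ℝ}
    (hB : IntegrableOn (fun s => exp (s / 2)) B) :
    Tendsto (fun β : ℝ => ∫ s in B, if -(2 * β) ≤ s then (1 + s / (2 * β)) ^ β else 0)
      atTop (𝓝 (∫ s in B, exp (s / 2))) := by
  refine tendsto_integral_filter_of_dominated_convergence _ ?_ ?_ hB
    (ae_of_all _ tendsto_ite_one_add_div_rpow_exp)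
  · refine Eventually.of_forall fun β =>
      (Measurable.ite measurableSet_Ici ?_ measurable_const).aestronglyMeasurable
    fun_prop
  · filter_upwards [eventually_gt_atTop 0] with β hβ
    exact ae_of_all _ (norm_ite_one_add_div_rpow_le_exp hβ)

theorem stmt_2_general (d : ℕ)
    (A : Set (EuclideanSpace ℝ (Fin (d - 1))))
    (B : Set ℝ) (hBb : Bornology.IsBounded B) :
    Filter.Tendsto (fun β : ℝ =>
        cBeta d β * (2 * β) ^ (-(d : ℝ) / 2) *
          ∫ _v in A, ∫ s in B, (if -(2 * β) ≤ s then (1 + s / (2 * β)) ^ β else 0))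
      Filter.atTop
      (nhds ((2 * Real.pi) ^ (-(d : ℝ) / 2) * (volume A).toReal *
        ∫ s in B, Real.exp (s / 2))) := by
  have hexp : IntegrableOn (fun s => exp (s / 2)) B :=
    ((by fun_prop : Continuous fun s : ℝ => exp (s / 2)).continuousOn.integrableOn_compact
      hBb.isCompact_closure).mono_set subset_closure
  simp only [setIntegral_const, smul_eq_mul, measureReal_def, ← mul_assoc]
  exact ((tendsto_cBeta_mul_rpow d).mul_const _).mul
    (tendsto_setIntegral_ite_one_add_div_rpow hexp)

/-- For bounded Borel `A ⊆ ℝ^{d-1}` and `B ⊆ ℝ`,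
`c_{d,β} (2β)^{-d/2} ∫_A ∫_B 1{s ≥ -2β}(1+s/(2β))^β ds dw →
(2π)^{-d/2} λ_{d-1}(A) ∫_B e^{s/2} ds` as `β → ∞`. -/
theorem stmt_2 (d : ℕ) (hd : 2 ≤ d)
    (A : Set (EuclideanSpace ℝ (Fin (d - 1)))) (hA : MeasurableSet A)
    (hAb : Bornology.IsBounded A)
    (B : Set ℝ) (hB : MeasurableSet B) (hBb : Bornology.IsBounded B) :
    Filter.Tendsto (fun β : ℝ =>
        cBeta d β * (2 * β) ^ (-(d : ℝ) / 2) *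
          ∫ _v in A, ∫ s in B, (if -(2 * β) ≤ s then (1 + s / (2 * β)) ^ β else 0))
      Filter.atTop
      (nhds ((2 * Real.pi) ^ (-(d : ℝ) / 2) * (volume A).toReal *
        ∫ s in B, Real.exp (s / 2))) :=
  stmt_2_general d A B hBb
end

section
/- Let d ≥ 2 be an integer, β > 1 real, A > 0 and t ∈ ℝ. Then (c_{d,β} π^{(d−1)/2} / ((2β)^{d/2} Γ((d+1)/2))) · ∫_{−2β}^{t} (√(t−s) + A)^{d−1} (1 + s/(2β))^{β} ds < (2(d/2+1)^{d/2}/√π) · (A+1)^{d−1} e^{t/2}, where the integral is interpreted as 0 if t ≤ −2β. -/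
/-!
On `[-2β, t]` we have `(1 + s/(2β))^β ≤ e^{s/2}` and `√(t-s) + A ≤ (A+1)√(1+t-s)`, so the
integral is at most `(A+1)^{d-1} e^{t/2} ∫₀^∞ (1+r)^{(d-1)/2} e^{-r/2} dr`. For odd `d` this
moment is an explicit polynomial value; for even `d` the extra `√(1+r)` is bounded by its tangent
line at `1 + r = 3`. Since `β > 1`, each factor `β+1+j` of `Γ(β+1+d/2)/Γ(β+1)` is less than
`β(2+j)` (log-convexity of `Γ` takes care of the half-integer shift), which removes `β` from the
constant. What remains is an inequality between factorials, powers and double factorials.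
-/

open MeasureTheory

open Real Set
open scoped Nat

lemma one_add_div_nonneg {β s : ℝ} (hβ : 0 < β) (hs : -(2 * β) ≤ s) :
    0 ≤ 1 + s / (2 * β) := by
  rw [← neg_le_iff_add_nonneg', le_div_iff₀ (by positivity)]
  linarith

lemma one_add_div_rpow_le_exp {β s : ℝ} (hβ : 0 < β) (hs : -(2 * β) ≤ s) :
    (1 + s / (2 * β)) ^ β ≤ exp (s / 2) := by
  have hb := one_add_div_nonneg hβ hs
  calc (1 + s / (2 * β)) ^ β ≤ exp (s / (2 * β)) ^ β := by
        gcongr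
        linarith [add_one_le_exp (s / (2 * β))]
    _ = exp (s / 2) := by
        rw [← exp_mul]
        field_simp

lemma sqrt_add_le_mul_sqrt_one_add {A r : ℝ} (hA : 0 ≤ A) (hr : 0 ≤ r) :
    √r + A ≤ (A + 1) * √(1 + r) := by
  have h1 : √r ≤ √(1 + r) := sqrt_le_sqrt (by linarith)
  have h2 : 1 ≤ √(1 + r) := one_le_sqrt.mpr (by linarith)
  nlinarith

-- The tangent line of `√` at `3`, the mean of `1 + r` under the weight `e^{-r/2}/2`.
lemma sqrt_le_add_three_div {u : ℝ} (hu : 0 ≤ u) : √u ≤ (u + 3) / (2 * √3) := by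
  rw [le_div_iff₀ (by positivity)]
  nlinarith [sq_nonneg (√u - √3), sq_sqrt hu, sq_sqrt (show (0 : ℝ) ≤ 3 by norm_num)]

/-- `expMoment m u = ∫₀^∞ e^{-r/2} (u + r)^m dr`; the recursion is integration by parts. -/
noncomputable def expMoment : ℕ → ℝ → ℝ
  | 0, _ => 2
  | m + 1, u => 2 * u ^ (m + 1) + 2 * (m + 1) * expMoment m u

lemma expMoment_pos (m : ℕ) {u : ℝ} (hu : 0 ≤ u) : 0 < expMoment m u := by
  induction m with
  | zero => norm_num [expMoment]
  | succ m ih => simp only [expMoment]; positivity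

lemma hasDerivAt_exp_mul_expMoment (m : ℕ) (t s : ℝ) :
    HasDerivAt (fun s => exp (s / 2) * expMoment m (1 + t - s))
      (exp (s / 2) * (1 + t - s) ^ m) s := by
  have hexp : HasDerivAt (fun s => exp (s / 2)) (exp (s / 2) * (1 / 2)) s :=
    ((hasDerivAt_id s).div_const 2).exp
  induction m with
  | zero =>
    simpa [expMoment] using hexp.mul_const 2
  | succ m ih =>
    have hpow : HasDerivAt (fun s => (1 + t - s) ^ (m + 1))
        ((m + 1) * (1 + t - s) ^ m * (-1)) s := by
      simpa using ((hasDerivAt_id s).const_sub (1 + t)).fun_pow (m + 1)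
    have h : HasDerivAt
        (fun s => exp (s / 2) * (2 * (1 + t - s) ^ (m + 1)) +
          2 * ((m : ℝ) + 1) * (exp (s / 2) * expMoment m (1 + t - s)))
        (exp (s / 2) * (1 / 2) * (2 * (1 + t - s) ^ (m + 1)) +
          exp (s / 2) * (2 * ((m + 1) * (1 + t - s) ^ m * (-1))) +
          2 * ((m : ℝ) + 1) * (exp (s / 2) * (1 + t - s) ^ m)) s :=
      (hexp.mul (hpow.const_mul 2)).add (ih.const_mul _)
    convert h using 1
    · funext x; simp only [expMoment]; ring
    · ring

lemma setIntegral_exp_mul_pow_le (m : ℕ) (a t : ℝ) :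
    ∫ s in Icc a t, exp (s / 2) * (1 + t - s) ^ m ≤ exp (t / 2) * expMoment m 1 := by
  rcases le_or_gt a t with hat | hta
  · rw [integral_Icc_eq_integral_Ioc, ← intervalIntegral.integral_of_le hat,
      intervalIntegral.integral_eq_sub_of_hasDerivAt
        (fun s _ => hasDerivAt_exp_mul_expMoment m t s)
        ((by fun_prop : Continuous fun s => exp (s / 2) * (1 + t - s) ^ m).intervalIntegrable a t),
      add_sub_cancel_right]
    have := expMoment_pos m (show 0 ≤ 1 + t - a by linarith)
    nlinarith [exp_pos (a / 2)]
  · rw [Icc_eq_empty (not_le.mpr hta), Measure.restrict_empty, integral_zero_measure]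
    exact (mul_pos (exp_pos _) (expMoment_pos m zero_le_one)).le

-- `√(t-s) + A` is the radius of the section of `K(A,t)` at height `s`, and `(1 + s/(2β))^β`
-- the intensity of `ζ_β` there.
noncomputable def paraboloidIntegral (n : ℕ) (β A t : ℝ) : ℝ :=
  ∫ s in Icc (-(2 * β)) t, (√(t - s) + A) ^ n * (1 + s / (2 * β)) ^ β

lemma paraboloidIntegral_le {n : ℕ} {β A : ℝ} (t : ℝ) {g : ℝ → ℝ} (hβ : 0 < β)
    (hA : 0 ≤ A) (hg : Continuous g) (hsqrt : ∀ u, 1 ≤ u → √u ^ n ≤ g u) :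
    paraboloidIntegral n β A t ≤
      (A + 1) ^ n * ∫ s in Icc (-(2 * β)) t, exp (s / 2) * g (1 + t - s) := by
  rw [paraboloidIntegral, ← integral_const_mul]
  have hrpow : Continuous fun s : ℝ => (1 + s / (2 * β)) ^ β :=
    (continuous_rpow_const hβ.le).comp (by fun_prop)
  refine setIntegral_mono_on (by fun_prop : Continuous _).integrableOn_Icc
    (by fun_prop : Continuous _).integrableOn_Icc measurableSet_Icc fun s ⟨hs, hst⟩ => ?_
  have hradius : (√(t - s) + A) ^ n ≤ (A + 1) ^ n * g (1 + t - s) := by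
    calc (√(t - s) + A) ^ n ≤ ((A + 1) * √(1 + (t - s))) ^ n := by
          gcongr; exact sqrt_add_le_mul_sqrt_one_add hA (by linarith)
      _ ≤ (A + 1) ^ n * g (1 + t - s) := by
          rw [mul_pow, ← add_sub_assoc]; gcongr; exact hsqrt _ (by linarith)
  calc (√(t - s) + A) ^ n * (1 + s / (2 * β)) ^ β
      ≤ ((A + 1) ^ n * g (1 + t - s)) * exp (s / 2) :=
        mul_le_mul hradius (one_add_div_rpow_le_exp hβ hs)
          (rpow_nonneg (one_add_div_nonneg hβ hs) β)
          ((pow_nonneg (by positivity) n).trans hradius)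
    _ = (A + 1) ^ n * (exp (s / 2) * g (1 + t - s)) := by ring

lemma paraboloidIntegral_two_mul_le (m : ℕ) {β A : ℝ} (t : ℝ) (hβ : 0 < β) (hA : 0 ≤ A) :
    paraboloidIntegral (2 * m) β A t ≤ (A + 1) ^ (2 * m) * exp (t / 2) * expMoment m 1 := by
  calc paraboloidIntegral (2 * m) β A t
      ≤ (A + 1) ^ (2 * m) * ∫ s in Icc (-(2 * β)) t, exp (s / 2) * (1 + t - s) ^ m :=
        paraboloidIntegral_le t hβ hA (g := fun u => u ^ m) (by fun_prop) fun u hu => by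
          rw [pow_mul, sq_sqrt (by linarith)]
    _ ≤ (A + 1) ^ (2 * m) * exp (t / 2) * expMoment m 1 := by
        rw [mul_assoc]; gcongr; exact setIntegral_exp_mul_pow_le m _ t

lemma paraboloidIntegral_two_mul_add_one_le (m : ℕ) {β A : ℝ} (t : ℝ) (hβ : 0 < β)
    (hA : 0 ≤ A) :
    paraboloidIntegral (2 * m + 1) β A t ≤ (A + 1) ^ (2 * m + 1) * exp (t / 2) *
      ((expMoment (m + 1) 1 + 3 * expMoment m 1) / (2 * √3)) := by
  have hsqrt (u : ℝ) (hu : 1 ≤ u) :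
      √u ^ (2 * m + 1) ≤ (u ^ (m + 1) + 3 * u ^ m) / (2 * √3) := by
    rw [pow_succ, pow_mul, sq_sqrt (by linarith)]
    calc u ^ m * √u ≤ u ^ m * ((u + 3) / (2 * √3)) := by
          gcongr; exact sqrt_le_add_three_div (by linarith)
      _ = (u ^ (m + 1) + 3 * u ^ m) / (2 * √3) := by ring
  have hsplit : ∫ s in Icc (-(2 * β)) t,
        exp (s / 2) * (((1 + t - s) ^ (m + 1) + 3 * (1 + t - s) ^ m) / (2 * √3)) =
      ((∫ s in Icc (-(2 * β)) t, exp (s / 2) * (1 + t - s) ^ (m + 1)) +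
        3 * ∫ s in Icc (-(2 * β)) t, exp (s / 2) * (1 + t - s) ^ m) / (2 * √3) := by
    rw [← integral_const_mul, ← integral_add (by fun_prop : Continuous _).integrableOn_Icc
      (by fun_prop : Continuous _).integrableOn_Icc, ← integral_div]
    congr 1; ext s; ring
  calc paraboloidIntegral (2 * m + 1) β A t
      ≤ (A + 1) ^ (2 * m + 1) * ∫ s in Icc (-(2 * β)) t,
          exp (s / 2) * (((1 + t - s) ^ (m + 1) + 3 * (1 + t - s) ^ m) / (2 * √3)) :=
        paraboloidIntegral_le t hβ hA (by fun_prop) hsqrt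
    _ ≤ (A + 1) ^ (2 * m + 1) *
          ((exp (t / 2) * expMoment (m + 1) 1 + 3 * (exp (t / 2) * expMoment m 1)) /
            (2 * √3)) := by
        rw [hsplit]
        gcongr
        · exact setIntegral_exp_mul_pow_le (m + 1) _ t
        · exact setIntegral_exp_mul_pow_le m _ t
    _ = _ := by ring

lemma Gamma_add_half_le {x : ℝ} (hx : 0 < x) : Gamma (x + 1 / 2) ≤ √x * Gamma x := by
  have h := Gamma_mul_add_mul_le_rpow_Gamma_mul_rpow_Gamma hx (show 0 < x + 1 by linarith)
    (a := 1 / 2) (b := 1 / 2) (by norm_num) (by norm_num) (by norm_num)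
  have hΓ := Gamma_pos_of_pos hx
  rw [show 1 / 2 * x + 1 / 2 * (x + 1) = x + 1 / 2 by ring, Gamma_add_one hx.ne',
    mul_rpow hx.le hΓ.le] at h
  calc Gamma (x + 1 / 2) ≤ _ := h
    _ = √x * (Gamma x ^ (1 / 2 : ℝ) * Gamma x ^ (1 / 2 : ℝ)) := by rw [sqrt_eq_rpow]; ring
    _ = √x * Gamma x := by rw [← rpow_add hΓ]; norm_num

lemma Gamma_add_nat_succ_lt {β : ℝ} (hβ : 1 < β) (n : ℕ) :
    Gamma (β + 1 + (n + 1)) < β ^ (n + 1) * (n + 2)! * Gamma (β + 1) := by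
  have hΓ := Gamma_pos_of_pos (show 0 < β + 1 by linarith)
  induction n with
  | zero =>
    rw [Nat.cast_zero, zero_add, Gamma_add_one (by linarith)]
    norm_num
    nlinarith
  | succ n ih =>
    rw [show β + 1 + ((n + 1 : ℕ) + 1) = (β + 1 + (n + 1)) + 1 by push_cast; ring,
      Gamma_add_one (by positivity), Nat.factorial_succ]
    push_cast at ih ⊢
    have hle : β + 1 + (n + 1) ≤ β * (n + 3) := by nlinarith
    calc (β + 1 + (n + 1)) * Gamma (β + 1 + (n + 1))
        < (β + 1 + (n + 1)) * (β ^ (n + 1) * (n + 2)! * Gamma (β + 1)) := by gcongr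
      _ ≤ β * (n + 3) * (β ^ (n + 1) * (n + 2)! * Gamma (β + 1)) := by gcongr
      _ = _ := by ring

lemma Gamma_add_three_halves_add_nat_lt {β : ℝ} (hβ : 1 < β) (m : ℕ) :
    Gamma (β + 3 / 2 + m) < √(2 * β) * (β * (m + 3 / 2)) ^ m * Gamma (β + 1) := by
  have hΓ := Gamma_pos_of_pos (show 0 < β + 1 by linarith)
  induction m with
  | zero =>
    have hWendel := Gamma_add_half_le (show 0 < β + 1 by linarith)
    have hsqrt : √(β + 1) < √(2 * β) := sqrt_lt_sqrt (by linarith) (by linarith)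
    rw [show β + 1 + 1 / 2 = β + 3 / 2 by ring] at hWendel
    simp only [CharP.cast_eq_zero, add_zero, pow_zero, mul_one]
    nlinarith
  | succ m ih =>
    rw [show β + 3 / 2 + ((m + 1 : ℕ) : ℝ) = (β + 3 / 2 + m) + 1 by push_cast; ring,
      Gamma_add_one (by positivity)]
    push_cast
    have hle : β + 3 / 2 + m ≤ β * (m + 1 + 3 / 2) := by nlinarith
    calc (β + 3 / 2 + m) * Gamma (β + 3 / 2 + m)
        < (β + 3 / 2 + m) * (√(2 * β) * (β * (m + 3 / 2)) ^ m * Gamma (β + 1)) := by gcongr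
      _ ≤ β * (m + 1 + 3 / 2) * (√(2 * β) * (β * (m + 1 + 3 / 2)) ^ m * Gamma (β + 1)) := by
        gcongr; linarith
      _ = √(2 * β) * (β * (m + 1 + 3 / 2)) ^ (m + 1) * Gamma (β + 1) := by ring

noncomputable def gammaRatio (β x : ℝ) : ℝ :=
  Gamma (β + 1 + x) / (Gamma (β + 1) * (2 * β) ^ x)

lemma gammaRatio_nonneg {β x : ℝ} (hβ : 0 < β) (hx : 0 ≤ x) : 0 ≤ gammaRatio β x :=
  div_nonneg (Gamma_pos_of_pos (by linarith)).le
    (mul_nonneg (Gamma_pos_of_pos (by linarith)).le (rpow_nonneg (by linarith) x))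

lemma gammaRatio_nat_succ_lt {β : ℝ} (hβ : 1 < β) (n : ℕ) :
    gammaRatio β (n + 1) < (n + 2)! / 2 ^ (n + 1) := by
  have hΓ := Gamma_pos_of_pos (show 0 < β + 1 by linarith)
  rw [gammaRatio, show ((n : ℝ) + 1) = (n + 1 : ℕ) by push_cast; ring, rpow_natCast, mul_pow,
    div_lt_div_iff₀ (by positivity) (by positivity)]
  have h := Gamma_add_nat_succ_lt hβ n
  push_cast at h ⊢
  calc Gamma (β + 1 + (n + 1)) * 2 ^ (n + 1)
      < β ^ (n + 1) * (n + 2)! * Gamma (β + 1) * 2 ^ (n + 1) := by gcongr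
    _ = (n + 2)! * (Gamma (β + 1) * (2 ^ (n + 1) * β ^ (n + 1))) := by ring

lemma gammaRatio_nat_add_half_lt {β : ℝ} (hβ : 1 < β) (m : ℕ) :
    gammaRatio β (m + 1 / 2) < ((m + 3 / 2) / 2) ^ m := by
  have hΓ := Gamma_pos_of_pos (show 0 < β + 1 by linarith)
  have h2β : 0 < 2 * β := by linarith
  rw [gammaRatio, rpow_add h2β, rpow_natCast, ← sqrt_eq_rpow,
    show β + 1 + (m + 1 / 2) = β + 3 / 2 + m by ring, div_lt_iff₀ (by positivity)]
  calc Gamma (β + 3 / 2 + m) < √(2 * β) * (β * (m + 3 / 2)) ^ m * Gamma (β + 1) :=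
        Gamma_add_three_halves_add_nat_lt hβ m
    _ = ((m + 3 / 2) / 2) ^ m * (Gamma (β + 1) * ((2 * β) ^ m * √(2 * β))) := by
        rw [div_pow, mul_pow, mul_pow]; field_simp

lemma two_le_expMoment_one (m : ℕ) : 2 ≤ expMoment m 1 := by
  cases m with
  | zero => norm_num [expMoment]
  | succ m =>
    have := expMoment_pos m zero_le_one
    simp only [expMoment, one_pow]
    nlinarith

lemma succ_mul_expMoment_one_le (m : ℕ) :
    (m + 1) * expMoment m 1 ≤ 2 ^ (m + 1) * m ! * (2 * m + 1) := by
  induction m with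
  | zero => norm_num [expMoment]
  | succ m ih =>
    have hpow : (m : ℝ) + 2 ≤ 2 ^ (m + 1) * m ! := by
      have h1 : m + 1 < 2 ^ (m + 1) := Nat.lt_two_pow_self
      have h2 : 1 ≤ m ! := Nat.one_le_iff_ne_zero.mpr (Nat.factorial_ne_zero m)
      exact_mod_cast (show m + 2 ≤ 2 ^ (m + 1) * (m !) by nlinarith)
    simp only [expMoment, one_pow, Nat.factorial_succ]
    push_cast
    rw [pow_succ (2 : ℝ) (m + 1)]
    nlinarith [mul_le_mul_of_nonneg_left ih (show (0 : ℝ) ≤ m + 2 by positivity)]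

lemma expMoment_one_le (m : ℕ) : expMoment m 1 ≤ 2 ^ (m + 1) * m ! * √(m + 3 / 2) := by
  have hsqrt : (2 * m + 1) / (m + 1) ≤ √((m : ℝ) + 3 / 2) := by
    apply le_sqrt_of_sq_le
    rw [div_pow, div_le_iff₀ (by positivity)]
    have hm : (0 : ℝ) ≤ m := m.cast_nonneg
    nlinarith [sq_nonneg ((m : ℝ) - 1 / 3), mul_nonneg hm (sq_nonneg ((m : ℝ) - 1 / 3))]
  calc expMoment m 1 = (m + 1) * expMoment m 1 / (m + 1) := by field_simp
    _ ≤ 2 ^ (m + 1) * m ! * (2 * m + 1) / (m + 1) :=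
        div_le_div_of_nonneg_right (succ_mul_expMoment_one_le m) (by positivity)
    _ = 2 ^ (m + 1) * m ! * ((2 * m + 1) / (m + 1)) := by ring
    _ ≤ 2 ^ (m + 1) * m ! * √(m + 3 / 2) := by gcongr

lemma pow_mul_add_le_add_one_pow {x : ℝ} (hx : 0 ≤ x) (n : ℕ) :
    x ^ n * (x + (n + 1)) ≤ (x + 1) ^ (n + 1) := by
  induction n with
  | zero => simp
  | succ n ih =>
    push_cast
    calc x ^ (n + 1) * (x + (n + 1 + 1)) ≤ (x + 1) * (x ^ n * (x + (n + 1))) := by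
          rw [pow_succ]; nlinarith [pow_nonneg hx n]
      _ ≤ (x + 1) * (x + 1) ^ (n + 1) := by gcongr
      _ = (x + 1) ^ (n + 1 + 1) := by ring

lemma expMoment_one_add_two_le (m : ℕ) :
    expMoment (m + 2) 1 + 3 * expMoment (m + 1) 1 ≤
      (2 * m + 8) * (expMoment (m + 1) 1 + 3 * expMoment m 1) := by
  have h1 := two_le_expMoment_one (m + 1)
  have h0 := two_le_expMoment_one m
  simp only [expMoment, one_pow] at h1 ⊢
  push_cast at h1 ⊢
  nlinarith

lemma factorial_mul_expMoment_one_le (m : ℕ) :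
    (m + 2)! * (expMoment (m + 1) 1 + 3 * expMoment m 1) ≤
      12 * ((m : ℝ) + 2) ^ (m + 1) * (2 * m + 1)‼ := by
  obtain hm | hm := lt_or_ge m 2
  · interval_cases m <;> norm_num [expMoment, Nat.factorial, Nat.doubleFactorial]
  induction m, hm using Nat.le_induction with
  | base => norm_num [expMoment, Nat.factorial, Nat.doubleFactorial]
  | succ m hm ih =>
    have hm' : (2 : ℝ) ≤ m := by exact_mod_cast hm
    have hbern := pow_mul_add_le_add_one_pow (show (0 : ℝ) ≤ m + 2 by positivity) m
    have hpow :
        (2 * m + 8) * ((m : ℝ) + 2) ^ (m + 1) ≤ ((m : ℝ) + 3) ^ (m + 1) * (2 * m + 3) := by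
      calc (2 * m + 8) * ((m : ℝ) + 2) ^ (m + 1)
          = ((m : ℝ) + 2) ^ m * ((2 * m + 8) * (m + 2)) := by ring
        _ ≤ ((m : ℝ) + 2) ^ m * ((m + 2 + (m + 1)) * (2 * m + 3)) :=
            mul_le_mul_of_nonneg_left (by nlinarith) (by positivity)
        _ ≤ ((m : ℝ) + 2 + 1) ^ (m + 1) * (2 * m + 3) := by
            rw [← mul_assoc]; gcongr
        _ = ((m : ℝ) + 3) ^ (m + 1) * (2 * m + 3) := by ring
    have hstep := expMoment_one_add_two_le m
    rw [show m + 1 + 2 = (m + 2) + 1 by ring, Nat.factorial_succ,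
      show 2 * (m + 1) + 1 = (2 * m + 1) + 2 by ring, Nat.doubleFactorial_add_two]
    push_cast at ih ⊢
    calc ((m : ℝ) + 2 + 1) * (m + 2)! * (expMoment (m + 1 + 1) 1 + 3 * expMoment (m + 1) 1)
        ≤ ((m : ℝ) + 3) *
            ((m + 2)! * ((2 * m + 8) * (expMoment (m + 1) 1 + 3 * expMoment m 1))) := by
          rw [show ((m : ℝ) + 2 + 1) = m + 3 by ring, mul_assoc]
          gcongr
      _ ≤ ((m : ℝ) + 3) * (2 * m + 8) * (12 * ((m : ℝ) + 2) ^ (m + 1) * (2 * m + 1)‼) := by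
          rw [mul_left_comm _ (2 * (m : ℝ) + 8), ← mul_assoc]
          gcongr
      _ = 12 * ((m : ℝ) + 3) * (2 * m + 1)‼ * ((2 * m + 8) * ((m : ℝ) + 2) ^ (m + 1)) := by
          ring
      _ ≤ 12 * ((m : ℝ) + 3) * (2 * m + 1)‼ * (((m : ℝ) + 3) ^ (m + 1) * (2 * m + 3)) := by
          gcongr
      _ = _ := by ring

lemma cBeta_mul_rpow_div_eq (d : ℕ) (β : ℝ) :
    cBeta d β * π ^ (((d : ℝ) - 1) / 2) /
        ((2 * β) ^ ((d : ℝ) / 2) * Gamma (((d : ℝ) + 1) / 2)) =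
      gammaRatio β (d / 2) / (√π * Gamma ((d + 1) / 2)) := by
  have hπ : π ^ ((d : ℝ) / 2) ≠ 0 := (rpow_pos_of_pos pi_pos _).ne'
  rw [cBeta, gammaRatio, show ((d : ℝ) - 1) / 2 = d / 2 - 1 / 2 by ring, rpow_sub pi_pos,
    ← sqrt_eq_rpow, show (d : ℝ) / 2 + β + 1 = β + 1 + d / 2 by ring]
  field_simp

lemma cBeta_mul_integral_lt_of_bounds {d : ℕ} {β A t R B : ℝ} (hβ : 0 < β) (hA : 0 ≤ A)
    (hR : gammaRatio β (d / 2) < R)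
    (hJ : paraboloidIntegral (d - 1) β A t ≤ (A + 1) ^ (d - 1) * exp (t / 2) * B) (hB : 0 < B)
    (hRB : R * B ≤ 2 * ((d : ℝ) / 2 + 1) ^ ((d : ℝ) / 2) * Gamma (((d : ℝ) + 1) / 2)) :
    cBeta d β * π ^ (((d : ℝ) - 1) / 2) /
        ((2 * β) ^ ((d : ℝ) / 2) * Gamma (((d : ℝ) + 1) / 2)) *
        paraboloidIntegral (d - 1) β A t
      < 2 * ((d : ℝ) / 2 + 1) ^ ((d : ℝ) / 2) / √π * (A + 1) ^ (d - 1) * exp (t / 2) := by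
  have hΓ : 0 < Gamma (((d : ℝ) + 1) / 2) := Gamma_pos_of_pos (by positivity)
  have hX : 0 < (A + 1) ^ (d - 1) * exp (t / 2) := by positivity
  rw [cBeta_mul_rpow_div_eq, div_mul_eq_mul_div, div_lt_iff₀ (by positivity)]
  calc gammaRatio β (d / 2) * paraboloidIntegral (d - 1) β A t
      ≤ gammaRatio β (d / 2) * ((A + 1) ^ (d - 1) * exp (t / 2) * B) :=
        mul_le_mul_of_nonneg_left hJ (gammaRatio_nonneg hβ (by positivity))
    _ < R * ((A + 1) ^ (d - 1) * exp (t / 2) * B) := by gcongr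
    _ = R * B * ((A + 1) ^ (d - 1) * exp (t / 2)) := by ring
    _ ≤ 2 * ((d : ℝ) / 2 + 1) ^ ((d : ℝ) / 2) * Gamma (((d : ℝ) + 1) / 2) *
          ((A + 1) ^ (d - 1) * exp (t / 2)) := by gcongr
    _ = _ := by field_simp

lemma constant_le_of_odd {d m : ℕ} (hd : d = 2 * m + 1) :
    ((m + 3 / 2) / 2) ^ m * expMoment m 1 ≤
      2 * ((d : ℝ) / 2 + 1) ^ ((d : ℝ) / 2) * Gamma (((d : ℝ) + 1) / 2) := by
  have hd2 : (d : ℝ) / 2 = m + 1 / 2 := by rw [hd]; push_cast; ring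
  have hpow : ((m : ℝ) + 1 / 2 + 1) ^ ((m : ℝ) + 1 / 2) = (m + 3 / 2) ^ m * √(m + 3 / 2) := by
    rw [show (m : ℝ) + 1 / 2 + 1 = m + 3 / 2 by ring, rpow_add (by positivity), rpow_natCast,
      sqrt_eq_rpow]
  rw [hd2, hpow, show ((d : ℝ) + 1) / 2 = m + 1 by rw [hd]; push_cast; ring,
    Gamma_nat_eq_factorial]
  calc ((m + 3 / 2) / 2) ^ m * expMoment m 1
      ≤ ((m + 3 / 2) / 2) ^ m * (2 ^ (m + 1) * m ! * √(m + 3 / 2)) := by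
        gcongr; exact expMoment_one_le m
    _ = 2 * ((m + 3 / 2) ^ m * √(m + 3 / 2)) * m ! := by
        rw [div_pow, pow_succ]; field_simp

lemma constant_le_of_even {d m : ℕ} (hd : d = 2 * m + 2) :
    (m + 2)! / 2 ^ (m + 1) * ((expMoment (m + 1) 1 + 3 * expMoment m 1) / (2 * √3)) ≤
      2 * ((d : ℝ) / 2 + 1) ^ ((d : ℝ) / 2) * Gamma (((d : ℝ) + 1) / 2) := by
  have hd2 : (d : ℝ) / 2 = (m + 1 : ℕ) := by rw [hd]; push_cast; ring
  rw [hd2, rpow_natCast, show ((d : ℝ) + 1) / 2 = m + 1 + 1 / 2 by rw [hd]; push_cast; ring,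
    Gamma_nat_add_one_add_half]
  have hs3 : 0 < √3 := by positivity
  have h3π : √3 ≤ √π := sqrt_le_sqrt pi_gt_three.le
  calc (m + 2)! / 2 ^ (m + 1) * ((expMoment (m + 1) 1 + 3 * expMoment m 1) / (2 * √3))
      = (m + 2)! * (expMoment (m + 1) 1 + 3 * expMoment m 1) / (2 ^ (m + 1) * (2 * √3)) := by
        rw [div_mul_div_comm]
    _ ≤ 12 * ((m : ℝ) + 2) ^ (m + 1) * (2 * m + 1)‼ / (2 ^ (m + 1) * (2 * √3)) :=
        div_le_div_of_nonneg_right (factorial_mul_expMoment_one_le m) (by positivity)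
    _ = 2 * ((m : ℝ) + 2) ^ (m + 1) * (2 * m + 1)‼ * √3 / 2 ^ (m + 1) := by
        field_simp; rw [pow_succ]; nlinarith [sq_sqrt (show (0 : ℝ) ≤ 3 by norm_num)]
    _ ≤ 2 * ((m : ℝ) + 2) ^ (m + 1) * (2 * m + 1)‼ * √π / 2 ^ (m + 1) := by gcongr
    _ = _ := by push_cast; ring

/-- For `d ≥ 2`, `β > 1`, `A > 0` and `t ∈ ℝ`,
`(c_{d,β} π^{(d-1)/2}/((2β)^{d/2} Γ((d+1)/2))) ∫_{-2β}^{t} (√(t-s)+A)^{d-1}(1+s/(2β))^β ds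
 < (2(d/2+1)^{d/2}/√π)(A+1)^{d-1} e^{t/2}`
(the integral being `0` when `t ≤ -2β`). -/
theorem stmt_8 (d : ℕ) (hd : 2 ≤ d) (β A t : ℝ) (hβ : 1 < β) (hA : 0 < A) :
    cBeta d β * Real.pi ^ (((d : ℝ) - 1) / 2) /
        ((2 * β) ^ ((d : ℝ) / 2) * Real.Gamma (((d : ℝ) + 1) / 2)) *
        ∫ s in Set.Icc (-(2 * β)) t,
          (Real.sqrt (t - s) + A) ^ (d - 1) * (1 + s / (2 * β)) ^ β
      < 2 * ((d : ℝ) / 2 + 1) ^ ((d : ℝ) / 2) / Real.sqrt Real.pi *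
          (A + 1) ^ (d - 1) * Real.exp (t / 2) := by
  have hβ0 : 0 < β := by linarith
  rcases Nat.even_or_odd' d with ⟨k, rfl | rfl⟩
  · obtain ⟨m, rfl⟩ : ∃ m, k = m + 1 := ⟨k - 1, by omega⟩
    have hd1 : 2 * (m + 1) - 1 = 2 * m + 1 := by omega
    have hB := add_pos (expMoment_pos (m + 1) zero_le_one)
      (mul_pos three_pos (expMoment_pos m zero_le_one))
    refine cBeta_mul_integral_lt_of_bounds hβ0 hA.le ?_ ?_ (by positivity)
      (constant_le_of_even rfl)
    · rw [show ((2 * (m + 1) : ℕ) : ℝ) / 2 = m + 1 by push_cast; ring]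
      exact gammaRatio_nat_succ_lt hβ m
    · rw [hd1]
      exact paraboloidIntegral_two_mul_add_one_le m t hβ0 hA.le
  · refine cBeta_mul_integral_lt_of_bounds hβ0 hA.le ?_ ?_ (expMoment_pos k zero_le_one)
      (constant_le_of_odd rfl)
    · rw [show ((2 * k + 1 : ℕ) : ℝ) / 2 = k + 1 / 2 by push_cast; ring]
      exact gammaRatio_nat_add_half_lt hβ k
    · rw [Nat.add_sub_cancel]
      exact paraboloidIntegral_two_mul_le k t hβ0 hA.le
end

section
/- Let d ≥ 2 be an integer, A > 0 and t ∈ ℝ. Then (1/(2^{d/2} √π Γ((d+1)/2))) · ∫_{−∞}^{t} (√(t−s) + A)^{d−1} e^{s/2} ds < (2/√π) · (A+1)^{d−1} e^{t/2}. -/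
open MeasureTheory Real Set

/-!
After the substitution `u = t - s` and a binomial expansion of `(√u + A) ^ (d - 1)`, the integral
becomes `2 e^{t/2} ∑ₖ C(d-1,k) A^{d-1-k} g(k)` with `g(x) = 2^{x/2} Γ(x/2 + 1)`, each term being a
Gamma integral. The right-hand side is the same sum with every `g(k)` replaced by `g(d-1)`, up to
the factor `√2 g(d-1) = 2^{d/2} Γ((d+1)/2)` of the normalisation. So it suffices that
`g(k) ≤ g(d-1) < √2 g(d-1)`; `g` increases along the integers because log-convexity of `Γ` gives
`Γ(s + 1/2)² ≤ Γ(s) Γ(s + 1) = Γ(s + 1)² / s`.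
-/

theorem Real.sqrt_mul_Gamma_add_half_le {s : ℝ} (hs : 0 < s) :
    √s * Gamma (s + 1 / 2) ≤ Gamma (s + 1) := by
  have hconv := Gamma_mul_add_mul_le_rpow_Gamma_mul_rpow_Gamma (a := 1 / 2) (b := 1 / 2)
    hs (by linarith : 0 < s + 1) one_half_pos one_half_pos (by norm_num)
  rw [show 1 / 2 * s + 1 / 2 * (s + 1) = s + 1 / 2 by ring, ← sqrt_eq_rpow, ← sqrt_eq_rpow]
    at hconv
  calc √s * Gamma (s + 1 / 2) ≤ √s * (√(Gamma s) * √(Gamma (s + 1))) := by gcongr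
    _ = √(s * Gamma s) * √(Gamma (s + 1)) := by rw [sqrt_mul hs.le]; ring
    _ = Gamma (s + 1) := by
      rw [← Gamma_add_one hs.ne', mul_self_sqrt (Gamma_pos_of_pos (by linarith)).le]

theorem Real.Gamma_add_half_le_sqrt_two_mul_Gamma_add_one {s : ℝ} (hs : 1 / 2 ≤ s) :
    Gamma (s + 1 / 2) ≤ √2 * Gamma (s + 1) := by
  have h2s : 1 ≤ √2 * √s := by
    rw [← sqrt_mul zero_le_two, one_le_sqrt]; linarith
  calc Gamma (s + 1 / 2) ≤ √2 * √s * Gamma (s + 1 / 2) :=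
        le_mul_of_one_le_left (Gamma_pos_of_pos (by linarith)).le h2s
    _ ≤ √2 * Gamma (s + 1) := by
      rw [mul_assoc]; gcongr; exact sqrt_mul_Gamma_add_half_le (by linarith)

theorem two_rpow_half_mul_Gamma_le_succ {x : ℝ} (hx : 0 ≤ x) :
    2 ^ (x / 2) * Gamma (x / 2 + 1) ≤ 2 ^ ((x + 1) / 2) * Gamma ((x + 1) / 2 + 1) := by
  have := Gamma_add_half_le_sqrt_two_mul_Gamma_add_one (s := x / 2 + 1 / 2) (by linarith)
  rw [show x / 2 + 1 / 2 + 1 / 2 = x / 2 + 1 by ring] at this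
  rw [add_div, rpow_add two_pos, ← sqrt_eq_rpow, mul_assoc]
  convert mul_le_mul_of_nonneg_left this (rpow_nonneg zero_le_two (x / 2)) using 3

theorem monotone_two_rpow_half_mul_Gamma :
    Monotone fun n : ℕ => (2 : ℝ) ^ ((n : ℝ) / 2) * Gamma ((n : ℝ) / 2 + 1) :=
  monotone_nat_of_le_succ fun n => by
    simpa only [Nat.cast_succ] using two_rpow_half_mul_Gamma_le_succ n.cast_nonneg

theorem two_rpow_half_mul_Gamma_lt {k d : ℕ} (hkd : k < d) :
    (2 : ℝ) ^ ((k : ℝ) / 2) * Gamma ((k : ℝ) / 2 + 1) <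
      2 ^ ((d : ℝ) / 2) * Gamma (((d : ℝ) + 1) / 2) := by
  obtain ⟨m, rfl⟩ := Nat.exists_eq_add_of_lt hkd
  have hGamma : 0 < Gamma (((k + m : ℕ) : ℝ) / 2 + 1) := Gamma_pos_of_pos (by positivity)
  calc (2 : ℝ) ^ ((k : ℝ) / 2) * Gamma ((k : ℝ) / 2 + 1)
      ≤ 2 ^ (((k + m : ℕ) : ℝ) / 2) * Gamma (((k + m : ℕ) : ℝ) / 2 + 1) :=
        monotone_two_rpow_half_mul_Gamma (Nat.le_add_right k m)
    _ < √2 * (2 ^ (((k + m : ℕ) : ℝ) / 2) * Gamma (((k + m : ℕ) : ℝ) / 2 + 1)) :=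
        lt_mul_of_one_lt_left (by positivity) (by simp [lt_sqrt])
    _ = 2 ^ (((k + m + 1 : ℕ) : ℝ) / 2) * Gamma ((((k + m + 1 : ℕ) : ℝ) + 1) / 2) := by
        rw [sqrt_eq_rpow, ← mul_assoc, ← rpow_add two_pos]
        push_cast
        ring_nf

theorem integral_Iic_eq_integral_Ioi_sub {E : Type*} [NormedAddCommGroup E] [NormedSpace ℝ E]
    (f : ℝ → E) (t : ℝ) : ∫ s in Iic t, f s = ∫ u in Ioi 0, f (t - u) := by
  have hemb : MeasurableEmbedding fun u : ℝ => t - u :=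
    (Homeomorph.subLeft t).isClosedEmbedding.measurableEmbedding
  rw [← (volume.measurePreserving_sub_left t).setIntegral_preimage_emb hemb,
    ← integral_Ici_eq_integral_Ioi]
  congr 2
  ext u
  simp

theorem integral_sqrt_pow_mul_exp_neg_half (k : ℕ) :
    ∫ u in Ioi (0 : ℝ), √u ^ k * exp (-(u / 2)) =
      2 ^ ((k : ℝ) / 2 + 1) * Gamma ((k : ℝ) / 2 + 1) := by
  have h := integral_rpow_mul_exp_neg_mul_Ioi (a := (k : ℝ) / 2 + 1) (r := 1 / 2)
    (by positivity) one_half_pos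
  rw [one_div_one_div, add_sub_cancel_right] at h
  rw [← h]
  refine setIntegral_congr_fun measurableSet_Ioi fun u hu => ?_
  rw [sqrt_eq_rpow, ← rpow_natCast, ← rpow_mul (le_of_lt hu)]
  ring_nf

theorem integrableOn_sqrt_pow_mul_exp_neg_half (k : ℕ) :
    IntegrableOn (fun u : ℝ => √u ^ k * exp (-(u / 2))) (Ioi 0) := by
  refine (integrableOn_rpow_mul_exp_neg_mul_rpow (p := 1) (s := (k : ℝ) / 2) (b := 1 / 2)
    (by linarith [show (0 : ℝ) ≤ k / 2 by positivity]) one_pos one_half_pos).congr_fun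
    (fun u hu => ?_) measurableSet_Ioi
  rw [sqrt_eq_rpow, ← rpow_natCast, ← rpow_mul (le_of_lt hu)]
  simp only [rpow_one]
  ring_nf

theorem integral_Iic_sqrt_sub_add_pow_mul_exp (m : ℕ) (A t : ℝ) :
    ∫ s in Iic t, (√(t - s) + A) ^ m * exp (s / 2) =
      2 * exp (t / 2) * ∑ k ∈ Finset.range (m + 1),
        A ^ (m - k) * m.choose k * (2 ^ ((k : ℝ) / 2) * Gamma ((k : ℝ) / 2 + 1)) := by
  have hexpand : ∀ u : ℝ, (√u + A) ^ m * exp ((t - u) / 2) = ∑ k ∈ Finset.range (m + 1),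
      exp (t / 2) * (A ^ (m - k) * m.choose k) * (√u ^ k * exp (-(u / 2))) := by
    intro u
    rw [add_pow, Finset.sum_mul]
    refine Finset.sum_congr rfl fun k _ => ?_
    rw [sub_div, sub_eq_add_neg, exp_add]
    ring
  simp_rw [integral_Iic_eq_integral_Ioi_sub, sub_sub_cancel, hexpand]
  rw [integral_finsetSum _ fun k _ => (integrableOn_sqrt_pow_mul_exp_neg_half k).const_mul _,
    Finset.mul_sum]
  refine Finset.sum_congr rfl fun k _ => ?_
  rw [integral_const_mul, integral_sqrt_pow_mul_exp_neg_half, rpow_add_one two_ne_zero]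
  ring

/-- For `d ≥ 2`, `A > 0` and `t ∈ ℝ`,
`(1/(2^{d/2} √π Γ((d+1)/2))) ∫_{-∞}^{t} (√(t-s)+A)^{d-1} e^{s/2} ds
 < (2/√π)(A+1)^{d-1} e^{t/2}`. -/
theorem stmt_9 (d : ℕ) (hd : 2 ≤ d) (A t : ℝ) (hA : 0 < A) :
    1 / ((2 : ℝ) ^ ((d : ℝ) / 2) * Real.sqrt Real.pi * Real.Gamma (((d : ℝ) + 1) / 2)) *
        ∫ s in Set.Iic t, (Real.sqrt (t - s) + A) ^ (d - 1) * Real.exp (s / 2)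
      < 2 / Real.sqrt Real.pi * (A + 1) ^ (d - 1) * Real.exp (t / 2) := by
  set G := (2 : ℝ) ^ ((d : ℝ) / 2) * Gamma (((d : ℝ) + 1) / 2)
  have hG : 0 < G := by positivity
  have hbinom : (A + 1) ^ (d - 1) =
      ∑ k ∈ Finset.range (d - 1 + 1), A ^ (d - 1 - k) * (d - 1).choose k := by
    simp [add_comm A 1, add_pow]
  have hsum : ∑ k ∈ Finset.range (d - 1 + 1),
        A ^ (d - 1 - k) * (d - 1).choose k * (2 ^ ((k : ℝ) / 2) * Gamma ((k : ℝ) / 2 + 1)) <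
      ∑ k ∈ Finset.range (d - 1 + 1), A ^ (d - 1 - k) * (d - 1).choose k * G := by
    refine Finset.sum_lt_sum_of_nonempty Finset.nonempty_range_add_one fun k hk => ?_
    rw [Finset.mem_range] at hk
    have hkd : k < d := by omega
    have := Nat.choose_pos (Nat.lt_succ_iff.mp hk)
    exact mul_lt_mul_of_pos_left (two_rpow_half_mul_Gamma_lt hkd) (by positivity)
  rw [integral_Iic_sqrt_sub_add_pow_mul_exp, hbinom]
  calc _ = 2 * exp (t / 2) / (√π * G) * ∑ k ∈ Finset.range (d - 1 + 1),
        A ^ (d - 1 - k) * (d - 1).choose k * (2 ^ ((k : ℝ) / 2) * Gamma ((k : ℝ) / 2 + 1)) := by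
        ring
    _ < 2 * exp (t / 2) / (√π * G) *
          ∑ k ∈ Finset.range (d - 1 + 1), A ^ (d - 1 - k) * (d - 1).choose k * G :=
        mul_lt_mul_of_pos_left hsum (by positivity)
    _ = _ := by
      rw [← Finset.sum_mul]
      field_simp
end

section
/- Let i ≥ 0 be an integer and let β, t be real numbers with β > 1 + i/2 and t < 2β. Then ∫_{−∞}^{t} (t−s)^{i/2} (1 − s/(2β))^{−β} ds = 2^{i/2+1} Γ(i/2+1) · (β^{β} Γ(β−1−i/2)/Γ(β)) · (β − t/2)^{−β+1+i/2}; in particular the integral is finite. -/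
/-!
The substitution `s = t - (2β - t) u` turns the integral into a constant multiple of
`∫₀^∞ u^p (1 + u)^{-β} du` with `p = i/2`, and `u = x / (1 - x)` turns the latter into the Beta
integral `B(p + 1, β - 1 - p) = Γ(p + 1) Γ(β - 1 - p) / Γ(β)`.
-/

open MeasureTheory Set

namespace Complex

lemma ofReal_cpow_mul_one_sub_cpow {x : ℝ} (hx : x ∈ Icc (0 : ℝ) 1) (a b : ℝ) :
    (x : ℂ) ^ ((a : ℂ) - 1) * (1 - (x : ℂ)) ^ ((b : ℂ) - 1)
      = ((x ^ (a - 1) * (1 - x) ^ (b - 1) : ℝ) : ℂ) := by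
  rw [ofReal_mul, ofReal_cpow hx.1, ofReal_cpow (sub_nonneg.2 hx.2)]
  push_cast
  rfl

lemma betaIntegral_ofReal (a b : ℝ) :
    betaIntegral a b = ((∫ x in Ioo (0 : ℝ) 1, x ^ (a - 1) * (1 - x) ^ (b - 1) : ℝ) : ℂ) := by
  rw [betaIntegral, intervalIntegral.integral_of_le zero_le_one,
    integral_Ioc_eq_integral_Ioo, ← integral_complex_ofReal]
  exact setIntegral_congr_fun measurableSet_Ioo fun x hx ↦
    ofReal_cpow_mul_one_sub_cpow (Ioo_subset_Icc_self hx) a b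

end Complex

section SubstitutionDivOneSub

variable {E : Type*} [NormedAddCommGroup E] [NormedSpace ℝ E]

lemma hasDerivAt_div_one_sub {x : ℝ} (hx : x ≠ 1) :
    HasDerivAt (fun x ↦ x / (1 - x)) ((1 - x) ^ 2)⁻¹ x := by
  have hx' : 1 - x ≠ 0 := sub_ne_zero.2 hx.symm
  refine ((hasDerivAt_id' x).div ((hasDerivAt_id' x).const_sub 1) hx').congr_deriv ?_
  field_simp
  ring

lemma hasDerivWithinAt_div_one_sub_Ioo :
    ∀ x ∈ Ioo (0 : ℝ) 1, HasDerivWithinAt (fun x ↦ x / (1 - x)) ((1 - x) ^ 2)⁻¹ (Ioo 0 1) x :=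
  fun _ hx ↦ (hasDerivAt_div_one_sub hx.2.ne).hasDerivWithinAt

lemma injOn_div_one_sub : InjOn (fun x : ℝ ↦ x / (1 - x)) (Iio 1) := by
  intro x hx y hy h
  rw [div_eq_div_iff (sub_ne_zero.2 (ne_of_gt hx)) (sub_ne_zero.2 (ne_of_gt hy))] at h
  linarith

lemma image_div_one_sub_Ioo : (fun x : ℝ ↦ x / (1 - x)) '' Ioo 0 1 = Ioi 0 := by
  ext v
  refine ⟨?_, fun (hv : 0 < v) ↦ ⟨v / (1 + v), ⟨by positivity, ?_⟩, ?_⟩⟩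
  · rintro ⟨x, hx, rfl⟩
    exact div_pos hx.1 (sub_pos.2 hx.2)
  · rw [div_lt_one (by positivity)]
    linarith
  · have : (1 + v) ≠ 0 := by positivity
    field_simp
    ring

theorem integrableOn_Ioi_iff_comp_div_one_sub (g : ℝ → E) :
    IntegrableOn g (Ioi 0) ↔
      IntegrableOn (fun x ↦ ((1 - x) ^ 2)⁻¹ • g (x / (1 - x))) (Ioo 0 1) := by
  rw [← image_div_one_sub_Ioo, integrableOn_image_iff_integrableOn_abs_deriv_smul measurableSet_Ioo
    hasDerivWithinAt_div_one_sub_Ioo (injOn_div_one_sub.mono Ioo_subset_Iio_self)]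
  simp only [abs_inv, abs_pow, sq_abs]

theorem integral_Ioi_eq_integral_comp_div_one_sub (g : ℝ → E) :
    ∫ v in Ioi 0, g v = ∫ x in Ioo 0 1, ((1 - x) ^ 2)⁻¹ • g (x / (1 - x)) := by
  rw [← image_div_one_sub_Ioo, integral_image_eq_integral_abs_deriv_smul measurableSet_Ioo
    hasDerivWithinAt_div_one_sub_Ioo (injOn_div_one_sub.mono Ioo_subset_Iio_self)]
  simp only [abs_inv, abs_pow, sq_abs]

end SubstitutionDivOneSub

section SubstitutionSubMul

variable {E : Type*} [NormedAddCommGroup E] [NormedSpace ℝ E] {c : ℝ}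

lemma image_sub_mul_Ioi (t : ℝ) (hc : 0 < c) : (fun u ↦ t - c * u) '' Ioi 0 = Iio t := by
  ext s
  refine ⟨?_, fun (hs : s < t) ↦ ⟨(t - s) / c, div_pos (sub_pos.2 hs) hc, ?_⟩⟩
  · rintro ⟨u, hu, rfl⟩
    simpa using mul_pos hc hu
  · field_simp
    ring

lemma hasDerivWithinAt_sub_mul (t c : ℝ) (s : Set ℝ) :
    ∀ u ∈ s, HasDerivWithinAt (fun u ↦ t - c * u) (-c) s u :=
  fun u _ ↦ by simpa using (((hasDerivAt_id u).const_mul c).const_sub t).hasDerivWithinAt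

lemma injOn_sub_mul (t : ℝ) (hc : c ≠ 0) (s : Set ℝ) : InjOn (fun u ↦ t - c * u) s :=
  fun _ _ _ _ h ↦ mul_left_cancel₀ hc (sub_right_injective h)

theorem integrableOn_Iio_iff_comp_sub_mul (g : ℝ → E) (t : ℝ) (hc : 0 < c) :
    IntegrableOn g (Iio t) ↔ IntegrableOn (fun u ↦ g (t - c * u)) (Ioi 0) := by
  rw [← image_sub_mul_Ioi t hc, integrableOn_image_iff_integrableOn_abs_deriv_smul measurableSet_Ioi
    (hasDerivWithinAt_sub_mul t c _) (injOn_sub_mul t hc.ne' _), abs_neg, abs_of_pos hc]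
  exact integrable_smul_iff hc.ne' _

theorem integral_Iio_eq_smul_integral_comp_sub_mul (g : ℝ → E) (t : ℝ) (hc : 0 < c) :
    ∫ s in Iio t, g s = c • ∫ u in Ioi 0, g (t - c * u) := by
  rw [← image_sub_mul_Ioi t hc, integral_image_eq_integral_abs_deriv_smul measurableSet_Ioi
    (hasDerivWithinAt_sub_mul t c _) (injOn_sub_mul t hc.ne' _), abs_neg, abs_of_pos hc,
    integral_smul]

end SubstitutionSubMul

namespace Real

variable {a b p β t : ℝ}

theorem integrableOn_Ioo_rpow_mul_one_sub_rpow (ha : 0 < a) (hb : 0 < b) :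
    IntegrableOn (fun x ↦ x ^ (a - 1) * (1 - x) ^ (b - 1)) (Ioo (0 : ℝ) 1) := by
  have hC := (intervalIntegrable_iff_integrableOn_Ioo_of_le zero_le_one).1 <|
    Complex.betaIntegral_convergent (u := a) (v := b) (by simpa) (by simpa)
  have hR := (hC.congr_fun (fun x hx ↦
    Complex.ofReal_cpow_mul_one_sub_cpow (Ioo_subset_Icc_self hx) a b) measurableSet_Ioo).re
  simpa [IntegrableOn] using hR

theorem integral_Ioo_rpow_mul_one_sub_rpow (ha : 0 < a) (hb : 0 < b) :
    ∫ x in Ioo (0 : ℝ) 1, x ^ (a - 1) * (1 - x) ^ (b - 1) = Gamma a * Gamma b / Gamma (a + b) := by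
  have h := Complex.betaIntegral_eq_Gamma_mul_div a b (by simpa) (by simpa)
  rw [Complex.betaIntegral_ofReal, ← Complex.ofReal_add, Complex.Gamma_ofReal,
    Complex.Gamma_ofReal, Complex.Gamma_ofReal] at h
  exact_mod_cast h

lemma inv_one_sub_sq_mul_rpow_div_one_sub {x : ℝ} (hx : x ∈ Ioo (0 : ℝ) 1) (p b : ℝ) :
    ((1 - x) ^ 2)⁻¹ * ((x / (1 - x)) ^ p * (1 + x / (1 - x)) ^ (-b))
      = x ^ (p + 1 - 1) * (1 - x) ^ (b - p - 1 - 1) := by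
  have hx1 : 0 < 1 - x := sub_pos.2 hx.2
  have h1 : 1 + x / (1 - x) = (1 - x)⁻¹ := by field_simp; ring
  rw [h1, div_rpow hx.1.le hx1.le, inv_rpow hx1.le, ← rpow_neg hx1.le, neg_neg,
    ← rpow_natCast, ← rpow_neg hx1.le, div_eq_mul_inv, ← rpow_neg hx1.le]
  rw [show (1 - x) ^ (-((2 : ℕ) : ℝ)) * (x ^ p * (1 - x) ^ (-p) * (1 - x) ^ b)
      = x ^ p * ((1 - x) ^ (-((2 : ℕ) : ℝ)) * (1 - x) ^ (-p) * (1 - x) ^ b) by ring,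
    ← rpow_add hx1, ← rpow_add hx1]
  push_cast
  ring_nf

theorem integrableOn_Ioi_rpow_mul_one_add_rpow (hp : -1 < p) (hb : p + 1 < b) :
    IntegrableOn (fun v ↦ v ^ p * (1 + v) ^ (-b)) (Ioi (0 : ℝ)) := by
  rw [integrableOn_Ioi_iff_comp_div_one_sub]
  refine (integrableOn_Ioo_rpow_mul_one_sub_rpow (a := p + 1) (b := b - p - 1) (by linarith)
    (by linarith)).congr_fun (fun x hx ↦ ?_) measurableSet_Ioo
  exact (inv_one_sub_sq_mul_rpow_div_one_sub hx p b).symm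

theorem integral_Ioi_rpow_mul_one_add_rpow (hp : -1 < p) (hb : p + 1 < b) :
    ∫ v in Ioi 0, v ^ p * (1 + v) ^ (-b) = Gamma (p + 1) * Gamma (b - 1 - p) / Gamma b := by
  rw [integral_Ioi_eq_integral_comp_div_one_sub]
  simp only [smul_eq_mul]
  rw [setIntegral_congr_fun measurableSet_Ioo
    fun x hx ↦ inv_one_sub_sq_mul_rpow_div_one_sub hx p b,
    integral_Ioo_rpow_mul_one_sub_rpow (by linarith) (by linarith)]
  ring_nf

lemma sub_rpow_mul_one_sub_div_rpow_comp_sub_mul (hβ : 0 < β) (ht : t < 2 * β) {u : ℝ}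
    (hu : 0 < u) :
    (t - (t - (2 * β - t) * u)) ^ p * (1 - (t - (2 * β - t) * u) / (2 * β)) ^ (-β)
      = ((2 * β - t) ^ p * ((2 * β - t) / (2 * β)) ^ (-β)) * (u ^ p * (1 + u) ^ (-β)) := by
  have hc : 0 < 2 * β - t := sub_pos.2 ht
  have e : 1 - (t - (2 * β - t) * u) / (2 * β) = (2 * β - t) / (2 * β) * (1 + u) := by
    field_simp
    ring
  rw [sub_sub_cancel, e, mul_rpow hc.le hu.le, mul_rpow (by positivity) (by positivity)]
  ring

lemma mul_rpow_mul_div_rpow_eq (hβ : 0 < β) (ht : t < 2 * β) :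
    (2 * β - t) * ((2 * β - t) ^ p * ((2 * β - t) / (2 * β)) ^ (-β))
      = 2 ^ (p + 1) * β ^ β * (β - t / 2) ^ (-β + 1 + p) := by
  have hγ : 0 < β - t / 2 := by linarith
  rw [show 2 * β - t = 2 * (β - t / 2) by ring, mul_div_mul_left _ _ two_ne_zero,
    div_rpow hγ.le hβ.le, rpow_neg hβ.le, div_inv_eq_mul, mul_rpow zero_le_two hγ.le,
    rpow_add hγ, rpow_add hγ, rpow_add two_pos, rpow_one, rpow_one, rpow_neg hγ.le]
  field_simp

theorem integrableOn_Iic_sub_rpow_mul_one_sub_div_rpow (hp : -1 < p) (hpβ : p + 1 < β)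
    (ht : t < 2 * β) :
    IntegrableOn (fun s ↦ (t - s) ^ p * (1 - s / (2 * β)) ^ (-β)) (Iic t) := by
  have hβ : 0 < β := by linarith
  rw [integrableOn_Iic_iff_integrableOn_Iio,
    integrableOn_Iio_iff_comp_sub_mul _ t (sub_pos.2 ht)]
  exact IntegrableOn.congr_fun ((integrableOn_Ioi_rpow_mul_one_add_rpow hp hpβ).const_mul _)
    (fun u hu ↦ (sub_rpow_mul_one_sub_div_rpow_comp_sub_mul hβ ht hu).symm) measurableSet_Ioi

theorem integral_Iic_sub_rpow_mul_one_sub_div_rpow (hp : -1 < p) (hpβ : p + 1 < β)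
    (ht : t < 2 * β) :
    ∫ s in Iic t, (t - s) ^ p * (1 - s / (2 * β)) ^ (-β)
      = 2 ^ (p + 1) * Gamma (p + 1) * (β ^ β * Gamma (β - 1 - p) / Gamma β) *
          (β - t / 2) ^ (-β + 1 + p) := by
  have hβ : 0 < β := by linarith
  rw [integral_Iic_eq_integral_Iio, integral_Iio_eq_smul_integral_comp_sub_mul _ t (sub_pos.2 ht),
    setIntegral_congr_fun measurableSet_Ioi
      fun u hu ↦ sub_rpow_mul_one_sub_div_rpow_comp_sub_mul hβ ht hu,
    integral_const_mul, integral_Ioi_rpow_mul_one_add_rpow hp hpβ, smul_eq_mul, ← mul_assoc,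
    mul_rpow_mul_div_rpow_eq hβ ht]
  ring

end Real

/-- For integer `i ≥ 0` and reals `β > 1 + i/2`, `t < 2β`,
`∫_{-∞}^{t} (t-s)^{i/2} (1-s/(2β))^{-β} ds
 = 2^{i/2+1} Γ(i/2+1) (β^β Γ(β-1-i/2)/Γ(β)) (β-t/2)^{-β+1+i/2}`,
and in particular the integral is finite. -/
theorem stmt_10 (i : ℕ) (β t : ℝ) (hβ : 1 + (i : ℝ) / 2 < β) (ht : t < 2 * β) :
    IntegrableOn (fun s => (t - s) ^ ((i : ℝ) / 2) * (1 - s / (2 * β)) ^ (-β))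
      (Set.Iic t) ∧
    ∫ s in Set.Iic t, (t - s) ^ ((i : ℝ) / 2) * (1 - s / (2 * β)) ^ (-β)
      = (2 : ℝ) ^ ((i : ℝ) / 2 + 1) * Real.Gamma ((i : ℝ) / 2 + 1) *
          (β ^ β * Real.Gamma (β - 1 - (i : ℝ) / 2) / Real.Gamma β) *
          (β - t / 2) ^ (-β + 1 + (i : ℝ) / 2) := by
  have hp : -1 < (i : ℝ) / 2 := by linarith [show (0 : ℝ) ≤ i / 2 by positivity]
  have hpβ : (i : ℝ) / 2 + 1 < β := by linarith
  exact ⟨Real.integrableOn_Iic_sub_rpow_mul_one_sub_div_rpow hp hpβ ht,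
    Real.integral_Iic_sub_rpow_mul_one_sub_div_rpow hp hpβ ht⟩
end

section
/- Let d ≥ 2 be an integer, let β₀ > (d+1)/2 and β ≥ β₀ be real numbers, and let i be an integer with 0 ≤ i ≤ d−1. Then β^{i/2+1} Γ(β−1−i/2)/Γ(β) < (1 − (d+1)/(2β₀))^{−(d+1)/2}. -/
/-!
Write `k = i/2 + 1` and `K = (d+1)/2`, so that `1 ≤ k ≤ K < β₀ ≤ β`. Log-convexity of `Γ`,
together with `log Γ(y+1) - log Γ(y) = log y`, gives `(β-k)^k Γ(β-k) < Γ(β)` when `k > 1`,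
so the left-hand side is below `(β/(β-k))^k`. Since `k/β ≤ K/β₀`, the base `β/(β-k)` is at most
`r = (1 - K/β₀)⁻¹ > 1`, and `r^k ≤ r^K` finishes the proof. When `k = 1` the Gamma ratio is
exactly `β/(β-1)` and strictness comes from `1 < K` instead.
-/

open Real Set

namespace Real

theorem log_Gamma_add_one {x : ℝ} (hx : 0 < x) :
    log (Gamma (x + 1)) = log (Gamma x) + log x := by
  rw [Gamma_add_one hx.ne', log_mul hx.ne' (Gamma_pos_of_pos hx).ne', add_comm]

/-- The secant of `log ∘ Gamma` over `[x + 1, x + s]` dominates the unit secant over `[y, y + 1]`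
for `y = x + min (s - 1) 1 > x`, and the slope of the latter is `log y`. -/
theorem log_lt_secant_log_Gamma {x s : ℝ} (hx : 0 < x) (hs : 1 < s) :
    log x < (log (Gamma (x + s)) - log (Gamma (x + 1))) / (s - 1) := by
  have hsec := fun {a y z : ℝ} (ha : 0 < a) (hy : 0 < y) (hz : 0 < z) =>
    convexOn_log_Gamma.secant_mono (a := a) (x := y) (y := z) (mem_Ioi.2 ha) (mem_Ioi.2 hy)
      (mem_Ioi.2 hz)
  rcases le_or_gt s 2 with hs2 | hs2
  · calc log x < log (x + (s - 1)) := log_lt_log hx (by linarith)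
      _ = ((log ∘ Gamma) (x + (s - 1)) - (log ∘ Gamma) (x + s)) / (x + (s - 1) - (x + s)) := by
        rw [Function.comp_apply, Function.comp_apply, show x + s = x + (s - 1) + 1 by ring,
          log_Gamma_add_one (by linarith)]
        ring
      _ ≤ ((log ∘ Gamma) (x + 1) - (log ∘ Gamma) (x + s)) / (x + 1 - (x + s)) :=
        hsec (by linarith) (by linarith) (by linarith) (by linarith) (by linarith) (by linarith)
      _ = _ := by
        rw [Function.comp_apply, Function.comp_apply, ← neg_div_neg_eq]; ring_nf
  · calc log x < log (x + 1) := log_lt_log hx (by linarith)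
      _ = ((log ∘ Gamma) (x + 1 + 1) - (log ∘ Gamma) (x + 1)) / (x + 1 + 1 - (x + 1)) := by
        rw [Function.comp_apply, Function.comp_apply, log_Gamma_add_one (by linarith)]
        ring
      _ ≤ ((log ∘ Gamma) (x + s) - (log ∘ Gamma) (x + 1)) / (x + s - (x + 1)) :=
        hsec (by linarith) (by linarith) (by linarith) (by linarith) (by linarith) (by linarith)
      _ = _ := by rw [Function.comp_apply, Function.comp_apply]; ring_nf

theorem rpow_mul_Gamma_lt_Gamma_add {x s : ℝ} (hx : 0 < x) (hs : 1 < s) :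
    x ^ s * Gamma x < Gamma (x + s) := by
  have hΓx := Gamma_pos_of_pos hx
  rw [← log_lt_log_iff (mul_pos (rpow_pos_of_pos hx s) hΓx) (Gamma_pos_of_pos (by linarith)),
    log_mul (rpow_pos_of_pos hx s).ne' hΓx.ne', log_rpow hx]
  have hsec := (lt_div_iff₀ (by linarith : 0 < s - 1)).1 (log_lt_secant_log_Gamma hx hs)
  linarith [log_Gamma_add_one hx]

theorem mul_Gamma_sub_one_div_Gamma {β : ℝ} (hβ : 1 < β) :
    β * Gamma (β - 1) / Gamma β = β / (β - 1) := by
  have hΓ := Gamma_pos_of_pos (by linarith : 0 < β - 1)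
  conv_lhs => rw [← sub_add_cancel β 1, Gamma_add_one (by linarith), sub_add_cancel]
  rw [mul_div_mul_right _ _ hΓ.ne']

theorem rpow_mul_Gamma_sub_div_Gamma_lt {k β : ℝ} (hk : 1 < k) (hkβ : k < β) :
    β ^ k * Gamma (β - k) / Gamma β < (β / (β - k)) ^ k := by
  have hβk : 0 < β - k := by linarith
  have hΓ := Gamma_pos_of_pos hβk
  calc β ^ k * Gamma (β - k) / Gamma β
      < β ^ k * Gamma (β - k) / ((β - k) ^ k * Gamma (β - k)) := by
        refine div_lt_div_of_pos_left (mul_pos (rpow_pos_of_pos (by linarith) k) hΓ)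
          (mul_pos (rpow_pos_of_pos hβk k) hΓ) ?_
        simpa only [sub_add_cancel] using rpow_mul_Gamma_lt_Gamma_add hβk hk
    _ = (β / (β - k)) ^ k := by
        rw [mul_div_mul_right _ _ hΓ.ne', div_rpow (by linarith) hβk.le]

end Real

theorem div_sub_le_inv_one_sub_div {k K β₀ β : ℝ} (hk : 0 ≤ k) (hkK : k ≤ K) (hKβ₀ : K < β₀)
    (hβ : β₀ ≤ β) : β / (β - k) ≤ (1 - K / β₀)⁻¹ := by
  have hβ₀ : 0 < β₀ := by linarith
  have hK : 0 < 1 - K / β₀ := by rw [sub_pos, div_lt_one hβ₀]; exact hKβ₀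
  rw [← inv_div]
  refine inv_anti₀ hK ?_
  calc 1 - K / β₀ ≤ 1 - k / β := by
        gcongr 1 - ?_
        exact div_le_div₀ (by linarith) hkK hβ₀ hβ
    _ = (β - k) / β := by field_simp [(by linarith : β ≠ 0)]

/-- For `d ≥ 2`, reals `β₀ > (d+1)/2`, `β ≥ β₀`, and integer
`0 ≤ i ≤ d-1`: `β^{i/2+1} Γ(β-1-i/2)/Γ(β) < (1-(d+1)/(2β₀))^{-(d+1)/2}`. -/
theorem stmt_11 (d : ℕ) (hd : 2 ≤ d) (β₀ β : ℝ)
    (hβ₀ : ((d : ℝ) + 1) / 2 < β₀) (hβ : β₀ ≤ β) (i : ℕ) (hi : i ≤ d - 1) :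
    β ^ ((i : ℝ) / 2 + 1) * Real.Gamma (β - 1 - (i : ℝ) / 2) / Real.Gamma β
      < (1 - ((d : ℝ) + 1) / (2 * β₀)) ^ (-((d : ℝ) + 1) / 2) := by
  set K : ℝ := ((d : ℝ) + 1) / 2
  set k : ℝ := (i : ℝ) / 2 + 1
  have hK : 3 / 2 ≤ K := by
    show 3 / 2 ≤ ((d : ℝ) + 1) / 2
    have : (2 : ℝ) ≤ d := by exact_mod_cast hd
    linarith
  have hkK : k ≤ K := by
    show (i : ℝ) / 2 + 1 ≤ ((d : ℝ) + 1) / 2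
    have : (i : ℝ) + 1 ≤ d := by exact_mod_cast (by omega : i + 1 ≤ d)
    linarith
  have hk : 1 ≤ k := le_add_of_nonneg_left (by positivity)
  have hc : 0 < 1 - K / β₀ := by rw [sub_pos, div_lt_one (by linarith)]; exact hβ₀
  have hr : 1 < (1 - K / β₀)⁻¹ :=
    (one_lt_inv₀ hc).2 (sub_lt_self 1 (div_pos (by linarith) (by linarith)))
  have hbase := div_sub_le_inv_one_sub_div (by linarith) hkK hβ₀ hβ
  rw [show β - 1 - (i : ℝ) / 2 = β - k by ring, ← div_div, neg_div, rpow_neg hc.le,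
    ← inv_rpow hc.le]
  rcases hk.eq_or_lt with hk1 | hk1
  · rw [← hk1] at hbase ⊢
    calc β ^ (1 : ℝ) * Real.Gamma (β - 1) / Real.Gamma β = β / (β - 1) := by
          rw [rpow_one, Real.mul_Gamma_sub_one_div_Gamma (by linarith)]
      _ ≤ (1 - K / β₀)⁻¹ ^ (1 : ℝ) := by rwa [rpow_one]
      _ < (1 - K / β₀)⁻¹ ^ K := rpow_lt_rpow_of_exponent_lt hr (by linarith)
  · calc β ^ k * Real.Gamma (β - k) / Real.Gamma β < (β / (β - k)) ^ k :=
          Real.rpow_mul_Gamma_sub_div_Gamma_lt hk1 (by linarith)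
      _ ≤ (1 - K / β₀)⁻¹ ^ k := rpow_le_rpow (div_nonneg (by linarith) (by linarith)) hbase
          (by linarith)
      _ ≤ (1 - K / β₀)⁻¹ ^ K := rpow_le_rpow_of_exponent_le hr.le hkK
end

section
/- Let d ≥ 2 be an integer and define T : ℝ^{d−1} × ℝ × (ℝ^{d−1})^d → (ℝ^{d−1} × ℝ)^d by T(w, r, z₁, …, z_d) = ((w+z₁, r−‖z₁‖²), …, (w+z_d, r−‖z_d‖²)). Then T is differentiable and the absolute value of the determinant of its derivative at (w, r, z₁, …, z_d) equals 2^{d−1} |det(z₂−z₁, …, z_d−z₁)| = 2^{d−1} (d−1)! Δ_{d−1}(z₁, …, z_d). -/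
open MeasureTheory

/-- `Δ_{d-1}(y₁,…,y_d) = |det(y₂-y₁,…,y_d-y₁)|/(d-1)!`, the `(d-1)`-dimensional
volume of the simplex `conv(y₁,…,y_d)` in `ℝ^{d-1}`. -/
noncomputable def svol (d : ℕ) (hd : 2 ≤ d)
    (y : Fin d → EuclideanSpace ℝ (Fin (d - 1))) : ℝ :=
  |(Matrix.of fun k j : Fin (d - 1) =>
      (y ⟨j.val + 1, by have := j.isLt; omega⟩ - y ⟨0, by omega⟩) k).det| /
    (Nat.factorial (d - 1))

/-- The map `T(w,r,z₁,…,z_d) = ((w+z₁, r-‖z₁‖²),…,(w+z_d, r-‖z_d‖²))`. -/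
noncomputable def Tmap (d : ℕ) :
    EuclideanSpace ℝ (Fin (d - 1)) × ℝ × (Fin d → EuclideanSpace ℝ (Fin (d - 1))) →
      Fin d → EuclideanSpace ℝ (Fin (d - 1)) × ℝ :=
  fun p i => (p.1 + p.2.2 i, p.2.1 - ‖p.2.2 i‖ ^ 2)

/-- Coordinates of the codomain `(ℝ^{d-1} × ℝ)^d` indexed by `Fin d × Fin d`:
index `(i,k)` is the `k`-th coordinate of `v_i` when `k < d-1`, and `h_i` when `k = d-1`. -/
noncomputable def outCoord (d : ℕ) (ik : Fin d × Fin d)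
    (y : Fin d → EuclideanSpace ℝ (Fin (d - 1)) × ℝ) : ℝ :=
  if h : ik.2.val < d - 1 then (y ik.1).1 ⟨ik.2.val, h⟩ else (y ik.1).2

/-- The standard basis of the domain `ℝ^{d-1} × ℝ × (ℝ^{d-1})^d` indexed by
`Fin d × Fin d`: index `(j,l)` with `l < d-1` is the `l`-th basis vector of the
`z_j`-block; `(j, d-1)` with `j < d-1` is the `j`-th basis vector of the `w`-block;
`(d-1, d-1)` is the basis vector of the `r`-block. -/
noncomputable def inVec (d : ℕ) (jl : Fin d × Fin d) :
    EuclideanSpace ℝ (Fin (d - 1)) × ℝ × (Fin d → EuclideanSpace ℝ (Fin (d - 1))) :=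
  if h : jl.2.val < d - 1 then
    (0, 0, Pi.single jl.1 (EuclideanSpace.single ⟨jl.2.val, h⟩ (1 : ℝ)))
  else if h2 : jl.1.val < d - 1 then
    (EuclideanSpace.single ⟨jl.1.val, h2⟩ (1 : ℝ), 0, 0)
  else (0, 1, 0)

/-!
The derivative of `T` sends `(dw, dr, dz)` to `(dw + dz_i, dr - 2⟪z_i, dz_i⟫)_i`. In the coordinates
`outCoord`/`inVec`, reordered so that the `z`-coordinates come first, its matrix is `[[1, B], [C, D]]`,
so its determinant is that of the Schur complement `D - C B`, the `d × d` matrix with rows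
`(2 z_i, 1)`. Subtracting the first row from the others and expanding along the last column
leaves `±2^{d-1} det(z_{i+1} - z_1)`.
-/

open ContinuousLinearMap

section Derivative

variable {ι E : Type*} [NormedAddCommGroup E] [InnerProductSpace ℝ E]

noncomputable def tmapDeriv (z : ι → E) : E × ℝ × (ι → E) →L[ℝ] ι → E × ℝ :=
  pi fun i =>
    let dz : E × ℝ × (ι → E) →L[ℝ] E := (proj i).comp ((snd ℝ ℝ _).comp (snd ℝ E _))
    (fst ℝ E _ + dz).prod ((fst ℝ ℝ _).comp (snd ℝ E _) - (2 • innerSL ℝ (z i)).comp dz)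

@[simp]
theorem tmapDeriv_apply (z : ι → E) (v : E × ℝ × (ι → E)) (i : ι) :
    tmapDeriv z v i = (v.1 + v.2.2 i, v.2.1 - 2 * inner ℝ (z i) (v.2.2 i)) := by
  simp [tmapDeriv]

theorem hasFDerivAt_add_sub_norm_sq [Fintype ι] (p : E × ℝ × (ι → E)) :
    HasFDerivAt (fun q : E × ℝ × (ι → E) => fun i => (q.1 + q.2.2 i, q.2.1 - ‖q.2.2 i‖ ^ 2))
      (tmapDeriv p.2.2) p := by
  refine hasFDerivAt_pi'.2 fun i => ?_
  have hz : HasFDerivAt (fun q : E × ℝ × (ι → E) => q.2.2 i)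
      ((proj i).comp ((snd ℝ ℝ _).comp (snd ℝ E _))) p :=
    ((proj i).comp ((snd ℝ ℝ (ι → E)).comp (snd ℝ E (ℝ × (ι → E))))).hasFDerivAt
  refine ((hasFDerivAt_fst.add hz).prodMk (hasFDerivAt_snd.fst.sub hz.norm_sq)).congr_fderiv ?_
  ext v <;> simp

end Derivative

theorem hasFDerivAt_Tmap (d : ℕ)
    (p : EuclideanSpace ℝ (Fin (d - 1)) × ℝ × (Fin d → EuclideanSpace ℝ (Fin (d - 1)))) :
    HasFDerivAt (Tmap d) (tmapDeriv p.2.2) p :=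
  hasFDerivAt_add_sub_norm_sq p

theorem Matrix.det_of_snoc_one {R : Type*} [CommRing R] {n : ℕ} (v : Fin (n + 1) → Fin n → R) :
    (Matrix.of fun i => (Fin.snoc (v i) 1 : Fin (n + 1) → R)).det =
      (-1) ^ n * (Matrix.of fun i j => v i.succ j - v 0 j).det := by
  set N : Matrix (Fin (n + 1)) (Fin (n + 1)) R :=
    Matrix.of fun i => Fin.cases (Fin.snoc (v 0) 1) (fun i => Fin.snoc (v i.succ - v 0) 0) i
  have hsub_row_zero : (Matrix.of fun i => (Fin.snoc (v i) 1 : Fin (n + 1) → R)).det = N.det := by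
    refine Matrix.det_eq_of_forall_row_eq_smul_add_const (Fin.cases 0 fun _ => 1) 0 rfl ?_
    intro i j
    cases i using Fin.cases <;> cases j using Fin.lastCases <;> simp [N]
  rw [hsub_row_zero, Matrix.det_succ_column N (Fin.last n), Fin.sum_univ_succ,
    Finset.sum_eq_zero fun i _ => by simp [N]]
  simp [N, Matrix.submatrix]

def Equiv.prodFinSuccSum (α : Type*) (n : ℕ) : (α × Fin n) ⊕ α ≃ α × Fin (n + 1) where
  toFun := Sum.elim (fun ak => (ak.1, ak.2.castSucc)) (fun a => (a, Fin.last n))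
  invFun ak := Fin.lastCases (Sum.inr ak.1) (fun k => Sum.inl (ak.1, k)) ak.2
  left_inv := by rintro (⟨a, k⟩ | a) <;> simp
  right_inv := by
    rintro ⟨a, k⟩
    cases k using Fin.lastCases <;> simp

section Coordinates

variable (n : ℕ)

theorem outCoord_castSucc (i : Fin (n + 1)) (k : Fin n)
    (y : Fin (n + 1) → EuclideanSpace ℝ (Fin n) × ℝ) :
    outCoord (n + 1) (i, k.castSucc) y = (y i).1 k := by
  simp [outCoord]

theorem outCoord_last (i : Fin (n + 1)) (y : Fin (n + 1) → EuclideanSpace ℝ (Fin n) × ℝ) :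
    outCoord (n + 1) (i, Fin.last n) y = (y i).2 := by
  simp [outCoord]

theorem inVec_castSucc (j : Fin (n + 1)) (l : Fin n) :
    inVec (n + 1) (j, l.castSucc) = (0, 0, Pi.single j (EuclideanSpace.single l 1)) := by
  simp [inVec]

theorem inVec_castSucc_last (j : Fin n) :
    inVec (n + 1) (j.castSucc, Fin.last n) = (EuclideanSpace.single j 1, 0, 0) := by
  simp [inVec]

theorem inVec_last_last : inVec (n + 1) (Fin.last n, Fin.last n) = (0, 1, 0) := by
  simp [inVec]

end Coordinates

section Jacobian

variable {n : ℕ} (z : Fin (n + 1) → EuclideanSpace ℝ (Fin n))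

noncomputable def tmapJacobian :
    Matrix (Fin (n + 1) × Fin (n + 1)) (Fin (n + 1) × Fin (n + 1)) ℝ :=
  Matrix.of fun ik jl => outCoord (n + 1) ik (tmapDeriv z (inVec (n + 1) jl))

theorem tmapJacobian_submatrix_prodFinSuccSum :
    (tmapJacobian z).submatrix (Equiv.prodFinSuccSum _ n) (Equiv.prodFinSuccSum _ n) =
      Matrix.fromBlocks 1
        (Matrix.of fun ik j => if ik.2.castSucc = j then 1 else 0)
        (Matrix.of fun i jl => if i = jl.1 then -(2 * z i jl.2) else 0)
        (Matrix.of fun _ j => if j = Fin.last n then 1 else 0) := by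
  ext (⟨i, k⟩ | i) (⟨j, l⟩ | j)
  · rcases eq_or_ne i j with rfl | hij <;>
      simp [tmapJacobian, Equiv.prodFinSuccSum, outCoord_castSucc, inVec_castSucc,
        Matrix.one_apply, *]
  · cases j using Fin.lastCases <;>
      simp [tmapJacobian, Equiv.prodFinSuccSum, outCoord_castSucc, inVec_castSucc_last,
        inVec_last_last]
  · rcases eq_or_ne i j with rfl | hij <;>
      simp [tmapJacobian, Equiv.prodFinSuccSum, outCoord_last, inVec_castSucc,
        EuclideanSpace.inner_single_right, *]
  · cases j using Fin.lastCases <;>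
      simp [tmapJacobian, Equiv.prodFinSuccSum, outCoord_last, inVec_castSucc_last,
        inVec_last_last]

theorem tmapJacobian_schur_complement :
    (Matrix.of fun (_ j : Fin (n + 1)) => if j = Fin.last n then 1 else 0) -
        (Matrix.of fun (i : Fin (n + 1)) (jl : Fin (n + 1) × Fin n) =>
            if i = jl.1 then -(2 * z i jl.2) else 0) *
          (Matrix.of fun (ik : Fin (n + 1) × Fin n) (j : Fin (n + 1)) =>
            if ik.2.castSucc = j then (1 : ℝ) else 0) =
      Matrix.of fun i => (Fin.snoc (fun k => 2 * z i k) 1 : Fin (n + 1) → ℝ) := by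
  ext i j
  cases j using Fin.lastCases <;> simp [Matrix.mul_apply, Fintype.sum_prod_type]

theorem abs_det_tmapJacobian :
    |(tmapJacobian z).det| =
      2 ^ n * |(Matrix.of fun k j : Fin n => (z j.succ - z 0) k).det| := by
  rw [← Matrix.det_submatrix_equiv_self (Equiv.prodFinSuccSum _ n),
    tmapJacobian_submatrix_prodFinSuccSum, Matrix.det_fromBlocks_one₁₁,
    tmapJacobian_schur_complement, Matrix.det_of_snoc_one]
  have hscale : (Matrix.of fun i j : Fin n => 2 * z i.succ j - 2 * z 0 j) =
      (2 : ℝ) • (Matrix.of fun k j : Fin n => (z j.succ - z 0) k).transpose := by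
    ext i j
    simp [mul_sub]
  rw [hscale, Matrix.det_smul, Matrix.det_transpose]
  simp [abs_mul]

end Jacobian

/-- `T` is differentiable and the absolute value of the determinant
of its derivative (in orthonormal coordinates) at `(w,r,z₁,…,z_d)` equals
`2^{d-1} |det(z₂-z₁,…,z_d-z₁)| = 2^{d-1} (d-1)! Δ_{d-1}(z₁,…,z_d)`. -/
theorem stmt_15 (d : ℕ) (hd : 2 ≤ d)
    (w : EuclideanSpace ℝ (Fin (d - 1))) (r : ℝ)
    (z : Fin d → EuclideanSpace ℝ (Fin (d - 1))) :
    Differentiable ℝ (Tmap d) ∧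
    |(Matrix.of fun ik jl : Fin d × Fin d =>
        outCoord d ik (fderiv ℝ (Tmap d) (w, r, z) (inVec d jl))).det|
      = (2 : ℝ) ^ (d - 1) *
          |(Matrix.of fun k j : Fin (d - 1) =>
              (z ⟨j.val + 1, by have := j.isLt; omega⟩ - z ⟨0, by omega⟩) k).det| ∧
    (2 : ℝ) ^ (d - 1) *
        |(Matrix.of fun k j : Fin (d - 1) =>
            (z ⟨j.val + 1, by have := j.isLt; omega⟩ - z ⟨0, by omega⟩) k).det|
      = (2 : ℝ) ^ (d - 1) * (Nat.factorial (d - 1) : ℝ) * svol d hd z := by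
  refine ⟨fun p => (hasFDerivAt_Tmap d p).differentiableAt, ?_, ?_⟩
  · -- `n + 1 - 1` reduces to `n`, so the lemmas stated over `Fin n` apply by `exact`
    obtain ⟨n, rfl⟩ : ∃ n, d = n + 1 := ⟨d - 1, by omega⟩
    rw [(hasFDerivAt_Tmap _ (w, r, z)).fderiv]
    exact abs_det_tmapJacobian z
  · rw [svol, mul_assoc, mul_div_cancel₀ _ (by positivity)]
end
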